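/- For every list a of length L ≥ 1 of positive integers, the canonical decoded forest decode(a) has exactly L+1 leaves, and the separation array of decode(a) equals a. (Encoding after decoding is the identity; this establishes the correctness of the decoding construction used in the proof of Theorem 1(2).) -/

import Mathlib

/-- A rooted plane tree: a node carrying a finite ordered list of child subtrees.
A node with no children is a leaf. -/
inductive PTree : Type where
  | node : List PTree → PTree

namespace PTree

mutual
/-- Number of leaves of a plane tree. -/
def leaves : PTree → ℕ
  | .node [] => 1
  | .node (c :: cs) => c.leaves + leavesList cs

/-- Total number of leaves of a list of plane trees. -/
def leavesList : List PTree → ℕ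
  | [] => 0
  | c :: cs => c.leaves + leavesList cs
end

mutual
/-- Height of a plane tree (a single leaf has height 1). -/
def height : PTree → ℕ
  | .node [] => 1
  | .node (c :: cs) => 1 + max c.height (heightList cs)

/-- Maximum height among a list of plane trees (0 for the empty list). -/
def heightList : List PTree → ℕ
  | [] => 0
  | c :: cs => max c.height (heightList cs)
end

mutual
/-- Separation levels between consecutive leaves inside a tree whose root is at level `l`:
between two consecutive leaves lying in distinct children we record `l+1`
(one more than the level of their lowest common ancestor, which is the root). -/
def enc : PTree → ℕ → List ℕ
  | .node [], _ => []
  | .node (c :: cs), l => c.enc (l + 1) ++ encList cs (l + 1)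

/-- Separation levels for a list of sibling subtrees all at level `l`, including
the separator `l` between consecutive subtrees. -/
def encList : List PTree → ℕ → List ℕ
  | [], _ => []
  | c :: cs, l => (l :: c.enc l) ++ encList cs l
end

end PTree

/-- Total number of leaves of a plane forest. -/
def forestLeaves (F : List PTree) : ℕ := PTree.leavesList F

/-- Height of a plane forest: the maximum level of any of its nodes (roots are at level 1). -/
def forestHeight (F : List PTree) : ℕ := PTree.heightList F

/-- The separation array of a plane forest: for each pair of consecutive leaves
(numbered left to right), the level at which they separate (`1` if they lie in
different trees, and `1 +` the level of their lowest common ancestor otherwise). -/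
def forestSep : List PTree → List ℕ
  | [] => []
  | t :: ts => t.enc 1 ++ PTree.encList ts 1

/-- Maximum entry of a list of naturals (`0` for the empty list). -/
def listMax (a : List ℕ) : ℕ := a.foldr max 0

/-- Split a list at the positions of entries equal to `v`, producing the list of the
(possibly empty) segments delimited by those entries; a list containing `k` occurrences
of `v` yields `k + 1` segments, in left-to-right order. -/
def splitSep (v : ℕ) : List ℕ → List (List ℕ)
  | [] => [[]]
  | x :: xs =>
    match splitSep v xs with
    | [] => [[]]
    | r :: rs => if x = v then [] :: r :: rs else (x :: r) :: rs

theorem splitSep_ne_nil (v : ℕ) (s : List ℕ) : splitSep v s ≠ [] := by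
  cases s with
  | nil => simp [splitSep]
  | cons x xs =>
    simp only [splitSep]
    cases h : splitSep v xs with
    | nil => simp
    | cons r rs => by_cases hxv : x = v <;> simp [hxv]

theorem listMax_le_of_mem_splitSep {v : ℕ} {s s' : List ℕ} (h : s' ∈ splitSep v s) :
    listMax s' ≤ listMax s := by
  induction s generalizing s' with
  | nil =>
    simp only [splitSep, List.mem_singleton] at h
    subst h; exact le_rfl
  | cons x xs ih =>
    simp only [splitSep] at h
    cases hs : splitSep v xs with
    | nil => exact absurd hs (splitSep_ne_nil v xs)
    | cons r rs =>
      rw [hs] at h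
      have hr : r ∈ splitSep v xs := by rw [hs]; exact List.mem_cons_self
      by_cases hxv : x = v
      · simp only [if_pos hxv, List.mem_cons] at h
        rcases h with h | h | h
        · subst h; simp [listMax]
        · subst h
          exact le_trans (ih hr) (by simp [listMax, le_max_iff, le_refl, or_true])
        · have : s' ∈ splitSep v xs := by rw [hs]; exact List.mem_cons_of_mem _ h
          exact le_trans (ih this) (by simp [listMax, le_max_iff, le_refl, or_true])
      · simp only [if_neg hxv, List.mem_cons] at h
        rcases h with h | h
        · subst h
          have := ih hr
          simp only [listMax, List.foldr] at *
          omega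
        · have : s' ∈ splitSep v xs := by rw [hs]; exact List.mem_cons_of_mem _ h
          have := ih this
          simp only [listMax, List.foldr] at *
          omega

/-- The canonical decoding `T(s, l)` of a list `s` (all of whose entries are intended to
be strictly greater than `l`) into a plane tree rooted at level `l`: the empty list
decodes to a single leaf, and otherwise the children are obtained by decoding, at level
`l + 1`, the segments of `s` delimited by the entries equal to `l + 1`. -/
def decodeT (s : List ℕ) (l : ℕ) : PTree :=
  if h : s = [] ∨ listMax s ≤ l then .node []
  else .node ((splitSep (l + 1) s).attach.map (fun x => decodeT x.1 (l + 1)))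
termination_by listMax s + 1 - l
decreasing_by
  have h1 : listMax x.1 ≤ listMax s := listMax_le_of_mem_splitSep x.2
  push_neg at h
  omega

/-- The canonical decoded forest of a list `a`: decode, as trees rooted at level `1`,
the segments of `a` delimited by the entries equal to `1`. -/
def decode (a : List ℕ) : List PTree := (splitSep 1 a).map (fun s => decodeT s 1)

/-!
Splitting at the separator `v` is `List.splitOn v`, and the separation array of a node at
level `l` is the arrays of its children at level `l + 1` joined by the separator `l + 1`,
i.e. `[l + 1].intercalate`. Since `[v].intercalate` inverts `List.splitOn v`, encoding undoes
the decoding level by level; the segments of a list of entries `> l` split at `l + 1` have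
entries `> l + 1` and a smaller maximum, which drives the recursion. Counting leaves is the
same recursion: joining `k + 1` segments inserts `k` separators.
-/

namespace List

variable {α : Type*}

theorem length_intercalate_singleton_add_one (a : α) {ls : List (List α)} (h : ls ≠ []) :
    ([a].intercalate ls).length + 1 = (ls.map (·.length + 1)).sum := by
  induction ls with
  | nil => exact absurd rfl h
  | cons l ls ih =>
    rcases eq_or_ne ls [] with rfl | hls
    · simp
    · simp [intercalate_cons_of_ne_nil hls, ← ih hls]
      omega

theorem subset_intercalate {sep r : List α} {ls : List (List α)} (h : r ∈ ls) :
    r ⊆ sep.intercalate ls := by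
  induction ls with
  | nil => simp at h
  | cons l ls ih =>
    rcases eq_or_ne ls [] with rfl | hls
    · simp_all
    · rw [intercalate_cons_of_ne_nil hls]
      rcases mem_cons.1 h with rfl | h
      · exact fun x hx => mem_append_left _ (mem_append_left _ hx)
      · exact fun x hx => mem_append_right _ (ih h hx)

variable [BEq α] [LawfulBEq α]

theorem subset_of_mem_splitOn {a : α} {xs r : List α} (h : r ∈ xs.splitOn a) : r ⊆ xs :=
  intercalate_splitOn (xs := xs) a ▸ subset_intercalate h

theorem not_mem_of_mem_splitOn {a : α} {xs r : List α} (h : r ∈ xs.splitOn a) : a ∉ r := by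
  induction xs generalizing r with
  | nil => simp_all [splitOn_nil]
  | cons x xs ih =>
    rw [splitOn_cons_eq_if_modifyHead] at h
    obtain ⟨r₀, rs, hrs⟩ := exists_cons_of_ne_nil (splitOn_ne_nil a xs)
    split_ifs at h with hx
    · rcases mem_cons.1 h with rfl | h
      · simp
      · exact ih h
    · rw [hrs, modifyHead_cons] at h
      rcases mem_cons.1 h with rfl | h
      · simp only [mem_cons, not_or]
        exact ⟨fun h => hx (by simp [h]), ih (hrs ▸ mem_cons_self)⟩
      · exact ih (hrs ▸ mem_cons_of_mem _ h)

end List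

theorem splitSep_eq_splitOn (v : ℕ) (s : List ℕ) : splitSep v s = s.splitOn v := by
  induction s with
  | nil => rfl
  | cons x xs ih =>
    obtain ⟨r, rs, hrs⟩ := List.exists_cons_of_ne_nil (splitSep_ne_nil v xs)
    rw [List.splitOn_cons_eq_if_modifyHead, ← ih, splitSep, hrs]
    simp

theorem le_listMax {x : ℕ} {s : List ℕ} (h : x ∈ s) : x ≤ listMax s := by
  induction s with
  | nil => simp at h
  | cons y ys ih =>
    rcases List.mem_cons.1 h with rfl | h
    · exact le_max_left _ _
    · exact (ih h).trans (le_max_right _ _)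

theorem lt_listMax {l : ℕ} {s : List ℕ} (hne : s ≠ []) (hs : ∀ x ∈ s, l < x) :
    l < listMax s := by
  obtain ⟨x, xs, rfl⟩ := List.exists_cons_of_ne_nil hne
  exact (hs x List.mem_cons_self).trans_le (le_listMax List.mem_cons_self)

theorem forall_lt_of_mem_splitOn {l : ℕ} {s r : List ℕ} (hs : ∀ x ∈ s, l < x)
    (hr : r ∈ s.splitOn (l + 1)) : ∀ x ∈ r, l + 1 < x := fun x hx =>
  lt_of_le_of_ne (hs x (List.subset_of_mem_splitOn hr hx))
    (fun h => List.not_mem_of_mem_splitOn hr (h ▸ hx))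

namespace PTree

theorem leavesList_eq_sum (ts : List PTree) : leavesList ts = (ts.map leaves).sum := by
  induction ts with
  | nil => rfl
  | cons t ts ih => simp [leavesList, ih]

theorem leaves_node_of_ne_nil {cs : List PTree} (h : cs ≠ []) :
    (node cs).leaves = leavesList cs := by
  obtain ⟨c, cs, rfl⟩ := List.exists_cons_of_ne_nil h
  rfl

theorem enc_append_encList (c : PTree) (cs : List PTree) (l : ℕ) :
    c.enc l ++ encList cs l = [l].intercalate ((c :: cs).map (enc · l)) := by
  induction cs generalizing c with
  | nil => simp [encList]
  | cons c' cs ih => simp [encList, ih]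

theorem enc_node (cs : List PTree) (l : ℕ) :
    (node cs).enc l = [l + 1].intercalate (cs.map (enc · (l + 1))) := by
  cases cs with
  | nil => rfl
  | cons c cs => exact enc_append_encList c cs (l + 1)

end PTree

open PTree

theorem forestSep_eq_intercalate (F : List PTree) :
    forestSep F = [1].intercalate (F.map (enc · 1)) := by
  cases F with
  | nil => rfl
  | cons t ts => exact enc_append_encList t ts 1

theorem leavesList_map_splitOn {v : ℕ} {s : List ℕ} (f : List ℕ → PTree)
    (hf : ∀ r ∈ s.splitOn v, (f r).leaves = r.length + 1) :
    leavesList ((s.splitOn v).map f) = s.length + 1 := by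
  conv_rhs => rw [← List.intercalate_splitOn (xs := s) v]
  rw [List.length_intercalate_singleton_add_one _ (List.splitOn_ne_nil v s), leavesList_eq_sum,
    List.map_map]
  exact congrArg List.sum (List.map_congr_left hf)

theorem intercalate_enc_map_splitOn {v : ℕ} {s : List ℕ} (f : List ℕ → PTree)
    (hf : ∀ r ∈ s.splitOn v, (f r).enc v = r) :
    [v].intercalate (((s.splitOn v).map f).map (enc · v)) = s := by
  rw [List.map_map, List.map_congr_left (f := (enc · v) ∘ f) (g := id) hf, List.map_id,
    List.intercalate_splitOn]

theorem decodeT_of_ne_nil {s : List ℕ} {l : ℕ} (hs : s ≠ []) (hl : ∀ x ∈ s, l < x) :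
    decodeT s l = .node ((s.splitOn (l + 1)).map (decodeT · (l + 1))) := by
  rw [decodeT, dif_neg (by simp [hs, lt_listMax hs hl]),
    List.attach_map_val (f := (decodeT · (l + 1))), splitSep_eq_splitOn]

theorem decodeT_leaves_and_enc (s : List ℕ) (l : ℕ) (hs : ∀ x ∈ s, l < x) :
    (decodeT s l).leaves = s.length + 1 ∧ (decodeT s l).enc l = s := by
  rcases eq_or_ne s [] with rfl | hne
  · simp [decodeT, leaves, enc]
  have IH : ∀ r ∈ s.splitOn (l + 1),
      (decodeT r (l + 1)).leaves = r.length + 1 ∧ (decodeT r (l + 1)).enc (l + 1) = r :=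
    fun r hr => decodeT_leaves_and_enc r (l + 1) (forall_lt_of_mem_splitOn hs hr)
  rw [decodeT_of_ne_nil hne hs, leaves_node_of_ne_nil (by simp [List.splitOn_ne_nil]), enc_node]
  exact ⟨leavesList_map_splitOn _ fun r hr => (IH r hr).1,
    intercalate_enc_map_splitOn _ fun r hr => (IH r hr).2⟩
termination_by listMax s + 1 - l
decreasing_by
  have : listMax r ≤ listMax s := listMax_le_of_mem_splitSep (splitSep_eq_splitOn _ s ▸ hr)
  have := lt_listMax hne hs
  omega

/-- For every list `a` of length `L ≥ 1` of positive integers, the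
canonical decoded forest `decode a` has exactly `L + 1` leaves, and the separation array
of `decode a` equals `a` (encoding after decoding is the identity). -/
theorem decode_leaves_and_sepArray (a : List ℕ) (hlen : 1 ≤ a.length)
    (hpos : ∀ x ∈ a, 1 ≤ x) :
    forestLeaves (decode a) = a.length + 1 ∧ forestSep (decode a) = a := by
  have hseg : ∀ r ∈ a.splitOn 1,
      (decodeT r 1).leaves = r.length + 1 ∧ (decodeT r 1).enc 1 = r :=
    fun r hr => decodeT_leaves_and_enc r 1 (forall_lt_of_mem_splitOn (l := 0) hpos hr)
  rw [decode, splitSep_eq_splitOn, forestLeaves, forestSep_eq_intercalate]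
  exact ⟨leavesList_map_splitOn _ fun r hr => (hseg r hr).1,
    intercalate_enc_map_splitOn _ fun r hr => (hseg r hr).2⟩
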